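/- arXiv:2505.06819 — 5 statements merged into one kernel-verified Lean document; each statement's English description precedes it below -/
import Mathlib

section
/- Let F be a field, let r ≥ 1 and let n be a positive integer with (r+1) | n. Let C ⊆ Fⁿ be a linear code of dimension k ≥ 1 whose coordinate set {1,…,n} is partitioned into n/(r+1) disjoint local groups, each of size r+1, such that for every group there exists a vector h ∈ Fⁿ whose support is exactly that group and which is orthogonal to C (i.e., Σ_i h_i c_i = 0 for every codeword c ∈ C). If the minimum distance d of C satisfies r ≥ d − 2, then d ≤ n − k − n/(r+1) + 2. -/
set_option maxHeartbeats 1000000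
set_option synthInstance.maxHeartbeats 1000000

open Module Submodule

section DualCode

variable {F : Type*} [Field F] {ι : Type*} [Fintype ι]

/-- The dot-product annihilator (dual code) of a subspace of `ι → F`. -/
def dualCode (W : Submodule F (ι → F)) : Submodule F (ι → F) where
  carrier := {v | ∀ w ∈ W, ∑ i, v i * w i = 0}
  add_mem' := by
    intro a b ha hb w hw
    simp only [Set.mem_setOf_eq] at *
    simp [add_mul, Finset.sum_add_distrib, ha w hw, hb w hw]
  zero_mem' := by simp
  smul_mem' := by
    intro c a ha w hw
    simp only [Set.mem_setOf_eq] at *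
    simp [smul_eq_mul, mul_assoc, ← Finset.mul_sum, ha w hw]

lemma mem_dualCode {W : Submodule F (ι → F)} {v : ι → F} :
    v ∈ dualCode W ↔ ∀ w ∈ W, ∑ i, v i * w i = 0 := Iff.rfl

lemma finrank_add_finrank_dualCode (W : Submodule F (ι → F)) :
    finrank F W + finrank F (dualCode W) = Fintype.card ι := by
  classical
  let T : (ι → F) →ₗ[F] Module.Dual F (ι → F) :=
    LinearMap.mk₂ F (fun v w => ∑ i, v i * w i)
      (fun a b w => by simp [add_mul, Finset.sum_add_distrib])
      (fun c a w => by simp [smul_eq_mul, mul_assoc, Finset.mul_sum])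
      (fun a b w => by simp [mul_add, Finset.sum_add_distrib])
      (fun c a w => by
        simp [smul_eq_mul, Finset.mul_sum, mul_left_comm])
  have hT : ∀ v w, T v w = ∑ i, v i * w i := fun v w => rfl
  have hinj : Function.Injective T := by
    intro v v' hvv
    funext j
    have hs : ∀ u : ι → F, ∑ i, u i * (Pi.single j 1 : ι → F) i = u j := by
      intro u
      rw [Finset.sum_eq_single j]
      · simp
      · intro b _ hb; simp [Pi.single_apply, hb]
      · intro hj; exact absurd (Finset.mem_univ j) hj
    have h2 : T v (Pi.single j 1) = T v' (Pi.single j 1) := by rw [hvv]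
    rw [hT, hT, hs, hs] at h2
    exact h2
  let E : (ι → F) ≃ₗ[F] Module.Dual F (ι → F) :=
    LinearMap.linearEquivOfInjective T hinj (Subspace.dual_finrank_eq (K := F)).symm
  have hE : ∀ v, (E v : Module.Dual F (ι → F)) = T v := fun v => rfl
  have hkey : dualCode W
      = W.dualAnnihilator.comap (E : (ι → F) →ₗ[F] Module.Dual F (ι → F)) := by
    ext v
    rw [mem_dualCode, Submodule.mem_comap, Submodule.mem_dualAnnihilator]
    simp only [LinearEquiv.coe_coe, hE, hT]
  have h1 : finrank F (dualCode W) = finrank F W.dualAnnihilator := by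
    rw [hkey]
    exact LinearEquiv.finrank_eq (LinearEquiv.ofSubmodule' E W.dualAnnihilator)
  have h2 : finrank F ((ι → F) ⧸ W) = finrank F W.dualAnnihilator :=
    LinearEquiv.finrank_eq (Subspace.quotEquivAnnihilator W)
  have h3 := Submodule.finrank_quotient_add_finrank W
  rw [Module.finrank_fintype_fun_eq_card] at h3
  omega

lemma dualCode_dualCode (W : Submodule F (ι → F)) :
    dualCode (dualCode W) = W := by
  have hle : W ≤ dualCode (dualCode W) := by
    intro w hw v hv
    rw [Finset.sum_congr rfl (fun i _ => mul_comm (w i) (v i))]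
    exact hv w hw
  refine (Submodule.eq_of_le_of_finrank_le hle ?_).symm
  have h1 := finrank_add_finrank_dualCode W
  have h2 := finrank_add_finrank_dualCode (dualCode W)
  omega

end DualCode

/-- **Refined Singleton-type bound for LRCs with disjoint local groups.**
Let `F` be a field, `r ≥ 1`, `(r+1) ∣ n`, and `C ⊆ Fⁿ` a linear code of dimension `k ≥ 1`
whose coordinates are partitioned into `n/(r+1)` disjoint local groups of size `r+1`
(fibers of `grp`), each group supporting a full-support dual codeword. If the minimum
distance `d` of `C` satisfies `r ≥ d − 2`, then `d ≤ n − k − n/(r+1) + 2`. -/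
theorem lrc_refined_singleton_bound {F : Type*} [Field F] [DecidableEq F]
    (n k r d : ℕ) (hk : 1 ≤ k) (hr : 1 ≤ r) (hdvd : (r + 1) ∣ n)
    (C : Submodule F (Fin n → F))
    (hdim : Module.finrank F C = k)
    (grp : Fin n → Fin (n / (r + 1)))
    (hfib : ∀ t, (Finset.univ.filter fun i => grp i = t).card = r + 1)
    (hpar : ∀ t, ∃ h : Fin n → F, (∀ i, h i ≠ 0 ↔ grp i = t) ∧
      ∀ c ∈ C, ∑ i, h i * c i = 0)
    (hd_ex : ∃ c ∈ C, c ≠ 0 ∧ hammingNorm c = d)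
    (hd_min : ∀ c ∈ C, c ≠ 0 → d ≤ hammingNorm c)
    (hrd : (d : ℤ) - 2 ≤ (r : ℤ)) :
    (d : ℤ) ≤ (n : ℤ) - (k : ℤ) - ((n / (r + 1) : ℕ) : ℤ) + 2 := by
  classical
  obtain ⟨c0, hc0C, hc0ne, hc0d⟩ := hd_ex
  have hd1 : 1 ≤ d := by
    rcases Nat.eq_zero_or_pos d with h0 | h
    · exact absurd (hammingNorm_eq_zero.mp (hc0d.trans h0)) hc0ne
    · exact h
  have hn : n ≠ 0 := by
    intro h
    subst h
    have hle := Submodule.finrank_le C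
    rw [hdim, Module.finrank_fintype_fun_eq_card] at hle
    simp at hle
    omega
  have hmpos : 0 < n / (r + 1) := Nat.div_pos (Nat.le_of_dvd (Nat.pos_of_ne_zero hn) hdvd) (by omega)
  choose hvec hsupp horth using hpar
  set B := dualCode C with hB
  have hBfin : k + finrank F B = n := by
    have h := finrank_add_finrank_dualCode C
    rw [hdim, Fintype.card_fin] at h
    exact h
  have hCB : dualCode B = C := by rw [hB, dualCode_dualCode]
  have hvB : ∀ t, hvec t ∈ B := fun t c hc => horth t c hc
  set t1 : Fin (n / (r + 1)) := ⟨0, hmpos⟩ with ht1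
  have hdr2 : d ≤ r + 2 := by omega
  obtain ⟨A, hAG, hAcard⟩ :=
    Finset.exists_subset_card_eq (s := Finset.univ.filter fun i => grp i = t1) (n := d - 1)
      (by rw [hfib t1]; omega)
  have hmemA : ∀ i : Fin n, i ∈ A → grp i = t1 := by
    intro i hi
    have := hAG hi
    simpa using (Finset.mem_filter.mp this).2
  let resA : (Fin n → F) →ₗ[F] (↥A → F) := LinearMap.funLeft F F (fun i : ↥A => (i : Fin n))
  have hsurj : Submodule.map resA B = ⊤ := by
    have hannbot : dualCode (Submodule.map resA B) = ⊥ := by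
      rw [Submodule.eq_bot_iff]
      intro v hv
      set vt : Fin n → F := fun j => if hj : j ∈ A then v ⟨j, hj⟩ else 0 with hvt
      have hvtsum : ∀ b : Fin n → F, ∑ j, vt j * b j = ∑ i : ↥A, v i * b i := by
        intro b
        rw [← Finset.sum_subset (Finset.subset_univ A)
          (fun x _ hx => by simp [hvt, dif_neg hx])]
        rw [← Finset.sum_coe_sort A (fun j => vt j * b j)]
        refine Finset.sum_congr rfl fun i _ => ?_
        simp [hvt]
      have hvtC : vt ∈ C := by
        rw [← hCB]
        intro b hb
        rw [hvtsum b]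
        exact hv (resA b) (Submodule.mem_map_of_mem hb)
      have hvtnorm : hammingNorm vt ≤ d - 1 := by
        rw [← hAcard]
        refine Finset.card_le_card ?_
        intro j hj
        simp only [Finset.mem_filter, Finset.mem_univ, true_and] at hj
        by_contra hjA
        exact hj (by simp [hvt, dif_neg hjA])
      have hvt0 : vt = 0 := by
        by_contra hne
        have := hd_min vt hvtC hne
        omega
      funext i
      have h0 : vt i = 0 := by rw [hvt0]; rfl
      rw [hvt] at h0
      simpa [dif_pos i.2] using h0
    have h1 := finrank_add_finrank_dualCode (Submodule.map resA B)
    rw [hannbot, finrank_bot] at h1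
    apply Submodule.eq_top_of_finrank_eq
    rw [Module.finrank_fintype_fun_eq_card]
    omega
  set w1 := resA (hvec t1) with hw1
  set Sw : Submodule F (↥A → F) := Submodule.span F {w1} with hSwdef
  let ρ : ↥B →ₗ[F] ((↥A → F) ⧸ Sw) := (Sw.mkQ.comp resA).comp B.subtype
  have hrange : LinearMap.range ρ = ⊤ := by
    show LinearMap.range ((Sw.mkQ.comp resA).comp B.subtype) = ⊤
    rw [LinearMap.range_comp, Submodule.range_subtype, Submodule.map_comp, hsurj,
      Submodule.map_top, Submodule.range_mkQ]
  have hgen : ∀ t, resA (hvec t) ∈ Sw := by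
    intro t
    by_cases ht : t = t1
    · subst ht; exact Submodule.mem_span_singleton_self w1
    · have hz : resA (hvec t) = 0 := by
        funext i
        show hvec t ↑i = 0
        by_contra hne
        have h1 := (hsupp t ↑i).mp hne
        rw [hmemA ↑i i.2] at h1
        exact ht h1.symm
      rw [hz]
      exact Submodule.zero_mem Sw
  have hli : LinearIndependent F hvec := by
    rw [Fintype.linearIndependent_iff]
    intro g hg t0
    have hfibne : ∃ i0, grp i0 = t0 := by
      have hc := hfib t0
      have hne : (Finset.univ.filter fun i => grp i = t0).Nonempty := by
        rw [← Finset.card_pos, hc]; omega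
      obtain ⟨i0, hi0⟩ := hne
      exact ⟨i0, (Finset.mem_filter.mp hi0).2⟩
    obtain ⟨i0, hi0⟩ := hfibne
    have hgi := congrFun hg i0
    rw [Finset.sum_apply] at hgi
    have hsingle : ∑ t, (g t • hvec t) i0 = g t0 * hvec t0 i0 := by
      rw [Finset.sum_eq_single t0]
      · rfl
      · intro t _ htne
        have hz : hvec t i0 = 0 := by
          by_contra h
          exact htne (((hsupp t i0).mp h).symm.trans hi0)
        simp [hz]
      · intro h; exact absurd (Finset.mem_univ t0) h
    rw [hsingle] at hgi
    have hne : hvec t0 i0 ≠ 0 := (hsupp t0 i0).mpr hi0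
    exact (mul_eq_zero.mp hgi).resolve_right hne
  set K' : Submodule F (Fin n → F) := Submodule.span F (Set.range hvec) with hK'
  have hK'B : K' ≤ B := Submodule.span_le.mpr (by rintro _ ⟨t, rfl⟩; exact hvB t)
  have hK'rank : finrank F K' = n / (r + 1) := by
    rw [hK', finrank_span_eq_card hli]
    simp
  have hcomap_le : Submodule.comap B.subtype K' ≤ LinearMap.ker ρ := by
    intro x hx
    rw [LinearMap.mem_ker]
    show Sw.mkQ (resA x.1) = 0
    rw [Submodule.mkQ_apply, Submodule.Quotient.mk_eq_zero]
    have hmem : (x : Fin n → F) ∈ Submodule.comap resA Sw := by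
      refine Submodule.span_le.mpr ?_ hx
      rintro _ ⟨t, rfl⟩
      exact hgen t
    exact hmem
  have hm_le : n / (r + 1) ≤ finrank F (LinearMap.ker ρ) := by
    have h1 : finrank F (Submodule.comap B.subtype K') = finrank F K' :=
      LinearEquiv.finrank_eq (Submodule.comapSubtypeEquivOfLe hK'B)
    have h2 := Submodule.finrank_mono hcomap_le
    omega
  have hrank := LinearMap.finrank_range_add_finrank_ker ρ
  rw [hrange, finrank_top] at hrank
  have hquot := Submodule.finrank_quotient_add_finrank Sw
  rw [Module.finrank_fintype_fun_eq_card, Fintype.card_coe, hAcard] at hquot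
  have hSw : finrank F Sw ≤ 1 := by
    rcases eq_or_ne w1 0 with h | h
    · rw [hSwdef, h, Submodule.span_zero_singleton]
      simp
    · rw [hSwdef, finrank_span_singleton h]
  omega
end

section
/- Let α and z be positive integers and set n = αz² + z, k = αz² − αz, r = αz and d = r + 2. Then (r+1) divides n, r ≥ d − 2, and n − k − n/(r+1) = d − 2. In other words, the UniLRC parameters attain with equality the refined Singleton-type bound d ≤ n − k − n/(r+1) + 2, so UniLRC is distance optimal. -/
/-- **UniLRC is distance optimal (Theorem 3.3).**
For positive integers `α` and `z`, with `n = αz² + z`, `k = αz² − αz`, `r = αz` and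
`d = r + 2`, one has `(r+1) ∣ n`, `r ≥ d − 2`, and `n − k − n/(r+1) = d − 2`; i.e. the
UniLRC parameters attain the refined Singleton-type bound `d ≤ n − k − n/(r+1) + 2`
with equality. -/
theorem unilrc_distance_optimal (α z n k r d : ℕ) (hα : 1 ≤ α) (hz : 1 ≤ z)
    (hn : n = α * z ^ 2 + z) (hk : k = α * z ^ 2 - α * z) (hr : r = α * z)
    (hd : d = r + 2) :
    (r + 1) ∣ n ∧ d - 2 ≤ r ∧ n - k - n / (r + 1) = d - 2 := by
  have hn' : n = z * (r + 1) := by subst hr hn; ring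
  refine ⟨⟨z, by rw [hn']; ring⟩, by omega, ?_⟩
  have hdiv : n / (r + 1) = z := by rw [hn']; exact Nat.mul_div_cancel z (by omega)
  have hle : α * z ≤ α * z ^ 2 := by nlinarith
  rw [hdiv]
  subst hn hk hr hd
  omega
end

section
/- Let α and z be positive integers and set n = αz² + z. Suppose an LRC of length n with locality parameter r has minimum distance d = r + 2 and tolerates a single cluster failure when its n blocks are split evenly across z clusters of n/z blocks each, i.e., d ≥ n/z + 1. Then r ≥ αz. In particular, UniLRC, whose locality parameter equals αz, achieves the minimum possible locality (and hence the minimum recovery locality r̄ = r) among such codes. -/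
/-- **UniLRC achieves the minimum locality (Theorem 3.4).**
Let `α, z ≥ 1` and `n = αz² + z`. If an LRC of length `n` with locality parameter `r`
has minimum distance `d = r + 2` and tolerates a single cluster failure when its `n`
blocks are split evenly across `z` clusters of `n/z` blocks each, i.e. `d ≥ n/z + 1`,
then `r ≥ αz`. -/
theorem unilrc_minimum_locality (α z n r d : ℕ) (hα : 1 ≤ α) (hz : 1 ≤ z)
    (hn : n = α * z ^ 2 + z) (hd : d = r + 2) (hclust : n / z + 1 ≤ d) :
    α * z ≤ r := by
  have hz0 : 0 < z := hz
  have hdiv : n / z = α * z + 1 := by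
    subst hn
    rw [show α * z ^ 2 + z = (α * z + 1) * z by ring, Nat.mul_div_cancel _ hz0]
  omega
end

section
/- With the UniLRC construction, for every message x ∈ F^k and every local group i ∈ {1,…,z}, the sum of the r+1 = αz+1 coordinates of the codeword Gx lying in group i equals 0. Equivalently (since F has characteristic 2), every coordinate of every UniLRC codeword equals the XOR (field sum) of the other r coordinates in its local group; in particular UniLRC is an (n, k, r)-LRC with locality r = αz and each local group is a recovery group. -/
/-!
The UniLRC construction. Fix positive integers `α` and `z` (`z ≥ 2`) and set
`n = αz² + z`, `k = αz² − αz`, `r = αz`. Over a field `F` of characteristic 2 with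
pairwise distinct nonzero elements `g j`:
* `uniG α z g` is the `n × k` generator matrix obtained by stacking the identity `I_k`,
  the global-parity matrix `𝒢` (entries `g_j^i`, `1 ≤ i ≤ αz`) and the local-parity
  matrix `𝓛 = 𝒢* + L`, where the `i`-th row of `𝒢*` is the sum of rows
  `(i−1)α+1, …, iα` of `𝒢`, and the `i`-th row of `L` is the indicator of the `i`-th
  consecutive block of `k/z = αz − α` columns.
* `uniGrpIdx α z p` is the index (in `{0, …, z−1}`) of the local group of coordinate
  `p`, and `uniGrpSet α z i` is the set of the `r+1` coordinates of group `i`: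
  the `αz − α` data coordinates of the `i`-th block, the `α` global-parity coordinates
  `k + iα, …, k + (i+1)α − 1`, and the local-parity coordinate `k + αz + i`
  (all 0-indexed).
-/

/-- The UniLRC generator matrix `G` (stacking `I_k`, `𝒢` and `𝓛`), with 0-indexed
rows and columns. -/
noncomputable def uniG {F : Type*} [Field F] (α z : ℕ)
    (g : Fin (α * z ^ 2 - α * z) → F) :
    Matrix (Fin (α * z ^ 2 + z)) (Fin (α * z ^ 2 - α * z)) F :=
  fun i j =>
    if i.val < α * z ^ 2 - α * z then
      -- rows of `I_k`
      (if i.val = j.val then 1 else 0)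
    else if i.val < (α * z ^ 2 - α * z) + α * z then
      -- rows of `𝒢`: entry `g_j ^ t` for `t = 1, …, αz`
      g j ^ (i.val - (α * z ^ 2 - α * z) + 1)
    else
      -- rows of `𝓛 = 𝒢* + L`
      (∑ γ ∈ Finset.range α,
        g j ^ ((i.val - ((α * z ^ 2 - α * z) + α * z)) * α + γ + 1)) +
      (if (i.val - ((α * z ^ 2 - α * z) + α * z)) * (α * z - α) ≤ j.val ∧
          j.val < ((i.val - ((α * z ^ 2 - α * z) + α * z)) + 1) * (α * z - α)
        then 1 else 0)

/-- The index of the local group containing coordinate `p` of a UniLRC stripe. -/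
def uniGrpIdx (α z : ℕ) (p : Fin (α * z ^ 2 + z)) : ℕ :=
  if p.val < α * z ^ 2 - α * z then
    p.val / (α * z - α)
  else if p.val < (α * z ^ 2 - α * z) + α * z then
    (p.val - (α * z ^ 2 - α * z)) / α
  else
    p.val - ((α * z ^ 2 - α * z) + α * z)

/-- The set of coordinates forming the `i`-th local group (`0 ≤ i < z`). -/
def uniGrpSet (α z : ℕ) (i : ℕ) : Finset (Fin (α * z ^ 2 + z)) :=
  Finset.univ.filter fun p => uniGrpIdx α z p = i

/-- The `(n−k) × k` matrix `A` obtained by stacking `𝒢` and `𝓛`. -/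
noncomputable def uniA {F : Type*} [Field F] (α z : ℕ)
    (g : Fin (α * z ^ 2 - α * z) → F) :
    Matrix (Fin (α * z + z)) (Fin (α * z ^ 2 - α * z)) F :=
  fun i j =>
    if i.val < α * z then
      g j ^ (i.val + 1)
    else
      (∑ γ ∈ Finset.range α, g j ^ ((i.val - α * z) * α + γ + 1)) +
      (if (i.val - α * z) * (α * z - α) ≤ j.val ∧
          j.val < ((i.val - α * z) + 1) * (α * z - α) then 1 else 0)

/-- The UniLRC parity-check matrix `H = [A | I_{n−k}]`. -/
noncomputable def uniH {F : Type*} [Field F] (α z : ℕ)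
    (g : Fin (α * z ^ 2 - α * z) → F) :
    Matrix (Fin (α * z + z)) (Fin (α * z ^ 2 + z)) F :=
  fun i p =>
    if h : p.val < α * z ^ 2 - α * z then
      uniA α z g i ⟨p.val, h⟩
    else if i.val = p.val - (α * z ^ 2 - α * z) then 1 else 0


/-! ### Auxiliary machinery for the locality proof -/

/-- Enumeration of the coordinates of local group `i` (as natural numbers):
`t ↦` the `t`-th coordinate of group `i`, for `t = 0, …, αz`. -/
private def uniE (α z i t : ℕ) : ℕ :=
  if t < α * z - α then i * (α * z - α) + t
  else if t < α * z then (α * z ^ 2 - α * z) + i * α + (t - (α * z - α))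
  else (α * z ^ 2 - α * z) + α * z + i

/-- A bundle of arithmetic facts used throughout. -/
private lemma uniFacts (α z i : ℕ) (hα : 1 ≤ α) (hz : 2 ≤ z) (hi : i < z) :
    α * 2 ≤ α * z ∧ 0 < α * z - α ∧ α * z ≤ α * z ^ 2 ∧
    z * (α * z - α) = α * z ^ 2 - α * z ∧
    (i + 1) * (α * z - α) = i * (α * z - α) + (α * z - α) ∧
    i * (α * z - α) + (α * z - α) ≤ z * (α * z - α) ∧
    i * α + α ≤ α * z ∧ z * α = α * z ∧
    (α * z ^ 2 - α * z) + α * z = α * z ^ 2 := by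
  have h1 : α * 2 ≤ α * z := Nat.mul_le_mul_left α hz
  have h3 : α * z ≤ α * z ^ 2 :=
    Nat.mul_le_mul_left α (Nat.le_self_pow two_ne_zero z)
  have h9 : (α * z ^ 2 - α * z) + α * z = α * z ^ 2 := Nat.sub_add_cancel h3
  have h8 : z * α = α * z := Nat.mul_comm _ _
  have h4 : z * (α * z - α) = α * z ^ 2 - α * z := by
    have e1 : z * (α * z - α) + z * α = z * (α * z) := by
      rw [← Nat.mul_add]
      congr 1
      omega
    have e2 : z * (α * z) = α * z ^ 2 := by ring
    omega
  have h5 : (i + 1) * (α * z - α) = i * (α * z - α) + (α * z - α) :=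
    Nat.succ_mul _ _
  have h6 : i * (α * z - α) + (α * z - α) ≤ z * (α * z - α) := by
    rw [← h5]
    exact Nat.mul_le_mul_right _ (by omega)
  have h7 : i * α + α ≤ α * z := by
    have e3 : (i + 1) * α ≤ z * α := Nat.mul_le_mul_right _ (by omega)
    have e4 : (i + 1) * α = i * α + α := Nat.succ_mul _ _
    omega
  exact ⟨h1, by omega, h3, h4, h5, h6, h7, h8, h9⟩

private lemma uniE_lt (α z i : ℕ) (hα : 1 ≤ α) (hz : 2 ≤ z) (hi : i < z) (t : ℕ) :
    uniE α z i t < α * z ^ 2 + z := by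
  obtain ⟨F1, F2, F3, F4, F5, F6, F7, F8, F9⟩ := uniFacts α z i hα hz hi
  unfold uniE
  split_ifs <;> omega

private lemma uniE_injOn (α z i : ℕ) (hα : 1 ≤ α) (hz : 2 ≤ z) (hi : i < z) :
    ∀ t < α * z + 1, ∀ s < α * z + 1, uniE α z i t = uniE α z i s → t = s := by
  intro t ht s hs h
  obtain ⟨F1, F2, F3, F4, F5, F6, F7, F8, F9⟩ := uniFacts α z i hα hz hi
  unfold uniE at h
  split_ifs at h <;> omega

private lemma uniGrpIdx_eq_of_val (α z i : ℕ) (hα : 1 ≤ α) (hz : 2 ≤ z)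
    (hi : i < z) (t : ℕ) (ht : t < α * z + 1) (p : Fin (α * z ^ 2 + z))
    (hpv : p.val = uniE α z i t) : uniGrpIdx α z p = i := by
  obtain ⟨F1, F2, F3, F4, F5, F6, F7, F8, F9⟩ := uniFacts α z i hα hz hi
  unfold uniGrpIdx
  by_cases h1 : t < α * z - α
  · have hv : p.val = i * (α * z - α) + t := by
      rw [hpv]; unfold uniE; rw [if_pos h1]
    rw [hv, if_pos (by omega), Nat.add_comm,
      Nat.add_mul_div_right _ _ F2, Nat.div_eq_of_lt h1]
    omega
  · by_cases h2 : t < α * z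
    · have hv : p.val = (α * z ^ 2 - α * z) + i * α + (t - (α * z - α)) := by
        rw [hpv]; unfold uniE; rw [if_neg h1, if_pos h2]
      rw [hv, if_neg (by omega), if_pos (by omega)]
      have h7 : (α * z ^ 2 - α * z) + i * α + (t - (α * z - α)) - (α * z ^ 2 - α * z)
          = (t - (α * z - α)) + i * α := by omega
      rw [h7, Nat.add_mul_div_right _ _ (show 0 < α by omega),
        Nat.div_eq_of_lt (by omega)]
      omega
    · have hv : p.val = (α * z ^ 2 - α * z) + α * z + i := by
        rw [hpv]; unfold uniE; rw [if_neg h1, if_neg h2]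
      rw [hv, if_neg (by omega), if_neg (by omega)]
      omega

private lemma uniGrpSet_eq (α z i : ℕ) (hα : 1 ≤ α) (hz : 2 ≤ z) (hi : i < z) :
    uniGrpSet α z i = (Finset.range (α * z + 1)).image
      (fun t => (⟨uniE α z i t, uniE_lt α z i hα hz hi t⟩ : Fin (α * z ^ 2 + z))) := by
  obtain ⟨F1, F2, F3, F4, F5, F6, F7, F8, F9⟩ := uniFacts α z i hα hz hi
  ext p
  simp only [uniGrpSet, Finset.mem_filter, Finset.mem_univ, true_and,
    Finset.mem_image, Finset.mem_range]
  constructor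
  · intro hp
    unfold uniGrpIdx at hp
    split_ifs at hp with h1 h2
    · have hle : i * (α * z - α) ≤ p.val := by
        rw [← hp]; exact Nat.div_mul_le_self _ _
      have hlt : p.val < i * (α * z - α) + (α * z - α) := by
        have h6 := Nat.lt_mul_div_succ p.val F2
        rw [hp] at h6
        have h7 : (α * z - α) * (i + 1) = i * (α * z - α) + (α * z - α) := by
          rw [Nat.mul_comm]; exact Nat.succ_mul _ _
        omega
      refine ⟨p.val - i * (α * z - α), by omega, ?_⟩
      apply Fin.ext
      show uniE α z i (p.val - i * (α * z - α)) = p.val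
      unfold uniE
      rw [if_pos (by omega)]
      omega
    · have hle : i * α ≤ p.val - (α * z ^ 2 - α * z) := by
        rw [← hp]; exact Nat.div_mul_le_self _ _
      have hlt : p.val - (α * z ^ 2 - α * z) < i * α + α := by
        have h6 := Nat.lt_mul_div_succ (p.val - (α * z ^ 2 - α * z))
          (show 0 < α by omega)
        rw [hp] at h6
        have h7 : α * (i + 1) = i * α + α := by
          rw [Nat.mul_comm]; exact Nat.succ_mul _ _
        omega
      refine ⟨(α * z - α) + (p.val - (α * z ^ 2 - α * z) - i * α), by omega, ?_⟩
      apply Fin.ext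
      show uniE α z i ((α * z - α) + (p.val - (α * z ^ 2 - α * z) - i * α)) = p.val
      unfold uniE
      rw [if_neg (by omega), if_pos (by omega)]
      omega
    · refine ⟨α * z, by omega, ?_⟩
      apply Fin.ext
      show uniE α z i (α * z) = p.val
      unfold uniE
      rw [if_neg (by omega), if_neg (by omega)]
      omega
  · rintro ⟨t, ht, rfl⟩
    exact uniGrpIdx_eq_of_val α z i hα hz hi t ht _ rfl

private lemma uniGrpIdx_lt (α z : ℕ) (hα : 1 ≤ α) (hz : 2 ≤ z)
    (p : Fin (α * z ^ 2 + z)) : uniGrpIdx α z p < z := by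
  obtain ⟨F1, F2, F3, F4, F5, F6, F7, F8, F9⟩ := uniFacts α z 0 hα hz (by omega)
  have hp := p.isLt
  unfold uniGrpIdx
  split_ifs with h1 h2
  · rw [Nat.div_lt_iff_lt_mul F2]; omega
  · rw [Nat.div_lt_iff_lt_mul (show 0 < α by omega)]; omega
  · omega

/-- Sum of an indicator over a shifted range. -/
private lemma uni_sum_indicator {F : Type*} [Field F] (m a c : ℕ) :
    ∑ t ∈ Finset.range m, (if a + t = c then (1 : F) else 0) =
      if a ≤ c ∧ c < a + m then 1 else 0 := by
  by_cases h : a ≤ c ∧ c < a + m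
  · rw [if_pos h, Finset.sum_eq_single (c - a)]
    · rw [if_pos (by omega)]
    · intro b hb hne
      rw [Finset.mem_range] at hb
      rw [if_neg (by omega)]
    · intro hc
      exact absurd (Finset.mem_range.mpr (by omega)) hc
  · rw [if_neg h]
    refine Finset.sum_eq_zero fun t ht => ?_
    rw [Finset.mem_range] at ht
    rw [if_neg (by omega)]

/-- Every column of `G`, summed over the rows of a local group, vanishes
(in characteristic 2). -/
private lemma uniG_colSum {F : Type*} [Field F] [CharP F 2] (α z : ℕ)
    (hα : 1 ≤ α) (hz : 2 ≤ z) (g : Fin (α * z ^ 2 - α * z) → F)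
    (i : ℕ) (hi : i < z) (j : Fin (α * z ^ 2 - α * z)) :
    ∑ p ∈ uniGrpSet α z i, uniG α z g p j = 0 := by
  obtain ⟨F1, F2, F3, F4, F5, F6, F7, F8, F9⟩ := uniFacts α z i hα hz hi
  have hinj : ∀ t ∈ Finset.range (α * z + 1), ∀ s ∈ Finset.range (α * z + 1),
      (⟨uniE α z i t, uniE_lt α z i hα hz hi t⟩ : Fin (α * z ^ 2 + z)) =
        ⟨uniE α z i s, uniE_lt α z i hα hz hi s⟩ → t = s := by
    intro t ht s hs h
    exact uniE_injOn α z i hα hz hi t (Finset.mem_range.mp ht) s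
      (Finset.mem_range.mp hs) (congrArg Fin.val h)
  rw [uniGrpSet_eq α z i hα hz hi, Finset.sum_image hinj]
  have key : ∀ (t : ℕ), t < α * z + 1 → ∀ (p : Fin (α * z ^ 2 + z)),
      p.val = uniE α z i t →
      uniG α z g p j =
      (if t < α * z - α then (if i * (α * z - α) + t = j.val then (1 : F) else 0)
       else if t < α * z then g j ^ (i * α + (t - (α * z - α)) + 1)
       else (∑ γ ∈ Finset.range α, g j ^ (i * α + γ + 1)) +
         (if i * (α * z - α) ≤ j.val ∧ j.val < i * (α * z - α) + (α * z - α)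
           then 1 else 0)) := by
    intro t ht p hpv
    unfold uniG
    by_cases h1 : t < α * z - α
    · have hv : p.val = i * (α * z - α) + t := by
        rw [hpv]; unfold uniE; rw [if_pos h1]
      rw [if_pos h1, hv, if_pos (by omega)]
    · by_cases h2 : t < α * z
      · have hv : p.val = (α * z ^ 2 - α * z) + i * α + (t - (α * z - α)) := by
          rw [hpv]; unfold uniE; rw [if_neg h1, if_pos h2]
        rw [if_neg h1, if_pos h2, hv, if_neg (by omega), if_pos (by omega)]
        have h7 : (α * z ^ 2 - α * z) + i * α + (t - (α * z - α)) -
            (α * z ^ 2 - α * z) + 1 = i * α + (t - (α * z - α)) + 1 := by omega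
        rw [h7]
      · have hv : p.val = (α * z ^ 2 - α * z) + α * z + i := by
          rw [hpv]; unfold uniE; rw [if_neg h1, if_neg h2]
        rw [if_neg h1, if_neg h2, hv, if_neg (by omega), if_neg (by omega)]
        have h8 : (α * z ^ 2 - α * z) + α * z + i - ((α * z ^ 2 - α * z) + α * z)
            = i := by omega
        rw [h8, F5]
  refine Eq.trans (Finset.sum_congr rfl fun t ht =>
    key t (Finset.mem_range.mp ht) _ rfl) ?_
  rw [Finset.sum_range_succ, if_neg (show ¬(α * z < α * z - α) by omega),
    if_neg (show ¬(α * z < α * z) by omega)]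
  rw [Finset.range_eq_Ico,
    ← Finset.sum_Ico_consecutive _ (Nat.zero_le (α * z - α))
      (show α * z - α ≤ α * z by omega),
    ← Finset.range_eq_Ico, Finset.sum_Ico_eq_sum_range]
  have e1 : ∑ t ∈ Finset.range (α * z - α),
      (if t < α * z - α then (if i * (α * z - α) + t = j.val then (1 : F) else 0)
       else if t < α * z then g j ^ (i * α + (t - (α * z - α)) + 1)
       else (∑ γ ∈ Finset.range α, g j ^ (i * α + γ + 1)) +
         (if i * (α * z - α) ≤ j.val ∧ j.val < i * (α * z - α) + (α * z - α)
           then 1 else 0))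
      = if i * (α * z - α) ≤ j.val ∧ j.val < i * (α * z - α) + (α * z - α)
          then 1 else 0 := by
    rw [← uni_sum_indicator (m := α * z - α) (a := i * (α * z - α)) (c := j.val)]
    refine Finset.sum_congr rfl fun t ht => ?_
    rw [Finset.mem_range] at ht
    rw [if_pos ht]
  have e2 : ∑ t ∈ Finset.range (α * z - (α * z - α)),
      (if (α * z - α) + t < α * z - α then
         (if i * (α * z - α) + ((α * z - α) + t) = j.val then (1 : F) else 0)
       else if (α * z - α) + t < α * z then
         g j ^ (i * α + ((α * z - α) + t - (α * z - α)) + 1)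
       else (∑ γ ∈ Finset.range α, g j ^ (i * α + γ + 1)) +
         (if i * (α * z - α) ≤ j.val ∧ j.val < i * (α * z - α) + (α * z - α)
           then 1 else 0))
      = ∑ γ ∈ Finset.range α, g j ^ (i * α + γ + 1) := by
    have hr : α * z - (α * z - α) = α := by omega
    rw [hr]
    refine Finset.sum_congr rfl fun t ht => ?_
    rw [Finset.mem_range] at ht
    rw [if_neg (by omega), if_pos (by omega), Nat.add_sub_cancel_left]
  rw [e1, e2]
  have final : ∀ X S : F, X + S + (S + X) = 0 := fun X S => by
    have h := CharTwo.add_self_eq_zero (X + S)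
    linear_combination h
  exact final _ _

/-- **UniLRC local parity / XOR locality (Property 2 ingredient).**
With the UniLRC construction over a field of characteristic 2, for every message `x`
and every local group `i ∈ {0,…,z−1}`, the sum of the `r+1 = αz+1` coordinates of the
codeword `G x` lying in group `i` equals `0`.  Equivalently (since `F` has
characteristic 2), every coordinate of every UniLRC codeword equals the XOR (field sum)
of the other `r` coordinates in its local group; in particular every local group is a
recovery group of size `r + 1 = αz + 1`, so UniLRC is an `(n, k, r)`-LRC with locality
`r = αz`. -/
theorem unilrc_xor_locality {F : Type*} [Field F] [CharP F 2]
    (α z : ℕ) (hα : 1 ≤ α) (hz : 2 ≤ z)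
    (g : Fin (α * z ^ 2 - α * z) → F) (hg : Function.Injective g)
    (hg0 : ∀ j, g j ≠ 0) :
    (∀ x : Fin (α * z ^ 2 - α * z) → F, ∀ i : Fin z,
      ∑ p ∈ uniGrpSet α z i.val, (uniG α z g).mulVec x p = 0) ∧
    (∀ x : Fin (α * z ^ 2 - α * z) → F, ∀ p : Fin (α * z ^ 2 + z),
      (uniG α z g).mulVec x p =
        ∑ q ∈ (uniGrpSet α z (uniGrpIdx α z p)).erase p, (uniG α z g).mulVec x q) ∧
    (∀ p : Fin (α * z ^ 2 + z),
      ((uniGrpSet α z (uniGrpIdx α z p)).erase p).card = α * z) := by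
  have main : ∀ (x : Fin (α * z ^ 2 - α * z) → F) (i : ℕ), i < z →
      ∑ p ∈ uniGrpSet α z i, (uniG α z g).mulVec x p = 0 := by
    intro x i hi
    simp only [Matrix.mulVec, dotProduct]
    rw [Finset.sum_comm]
    refine Finset.sum_eq_zero fun j _ => ?_
    rw [← Finset.sum_mul, uniG_colSum α z hα hz g i hi j, zero_mul]
  have hcard : ∀ i : ℕ, i < z → (uniGrpSet α z i).card = α * z + 1 := by
    intro i hi
    have hinj : Set.InjOn
        (fun t => (⟨uniE α z i t, uniE_lt α z i hα hz hi t⟩ : Fin (α * z ^ 2 + z)))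
        ↑(Finset.range (α * z + 1)) := by
      intro t ht s hs h
      simp only [Finset.coe_range, Set.mem_Iio] at ht hs
      exact uniE_injOn α z i hα hz hi t ht s hs (congrArg Fin.val h)
    rw [uniGrpSet_eq α z i hα hz hi, Finset.card_image_of_injOn hinj,
      Finset.card_range]
  have hmem : ∀ p : Fin (α * z ^ 2 + z), p ∈ uniGrpSet α z (uniGrpIdx α z p) := by
    intro p
    simp [uniGrpSet]
  refine ⟨fun x i => main x i.val i.isLt, fun x p => ?_, fun p => ?_⟩
  · have h0 := main x _ (uniGrpIdx_lt α z hα hz p)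
    rw [← Finset.add_sum_erase _ _ (hmem p)] at h0
    have h1 := eq_neg_of_add_eq_zero_left h0
    rwa [CharTwo.neg_eq] at h1
  · rw [Finset.card_erase_of_mem (hmem p), hcard _ (uniGrpIdx_lt α z hα hz p)]
    omega
end

section
/- With the UniLRC construction, any r + 1 = αz + 1 columns of the parity-check matrix H = [A | I_{n−k}] that avoid the αz identity columns corresponding to global-parity coordinates (i.e., are chosen only among the k data columns and the z local-parity identity columns) are linearly independent over F. -/
section Helpers

lemma uniVandZero {F : Type*} [Field F] {m : ℕ} (x : Fin m → F) (hx : Function.Injective x)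
    (c : Fin m → F) (h : ∀ t : Fin m, ∑ p, c p * x p ^ (t : ℕ) = 0) : c = 0 := by
  apply Matrix.eq_zero_of_mulVec_eq_zero (M := Matrix.transpose (Matrix.vandermonde x))
  · rw [Matrix.det_transpose, Matrix.det_vandermonde]
    refine Finset.prod_ne_zero_iff.mpr fun i _ => Finset.prod_ne_zero_iff.mpr fun j hj => ?_
    exact sub_ne_zero.mpr fun hxx => absurd (hx hxx) (Finset.mem_Ioi.mp hj).ne'
  · funext t
    simpa [Matrix.mulVec, dotProduct, Matrix.vandermonde, mul_comm] using h t

lemma uniSumBlocks {M : Type*} [AddCommMonoid M] (f : ℕ → M) (z a : ℕ) :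
    ∑ u ∈ Finset.range z, ∑ γ ∈ Finset.range a, f (u * a + γ) =
      ∑ t ∈ Finset.range (z * a), f t := by
  induction z with
  | zero => simp
  | succ n ih => rw [Finset.sum_range_succ, ih, Nat.succ_mul, Finset.sum_range_add]

lemma uniSumInd {F : Type*} [Field F] (z B jv : ℕ) (hB : 0 < B) (hj : jv < z * B) :
    ∑ u ∈ Finset.range z, (if u * B ≤ jv ∧ jv < (u + 1) * B then (1 : F) else 0) = 1 := by
  rw [Finset.sum_eq_single (jv / B)]
  · rw [if_pos]
    exact ⟨Nat.div_mul_le_self jv B, (Nat.div_lt_iff_lt_mul hB).mp (Nat.lt_succ_self _)⟩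
  · intro u _ hne
    rw [if_neg]
    rintro ⟨h1, h2⟩
    exact hne (Nat.div_eq_of_lt_le h1 h2).symm
  · intro hmem
    exact absurd (Finset.mem_range.mpr ((Nat.div_lt_iff_lt_mul hB).mpr hj)) hmem

end Helpers

section OneCol

variable {F : Type*} [Field F] [CharP F 2]

/-- Each data column of `H` sums to `1` over all rows. -/
lemma uniColSumOne (α z : ℕ) (hα : 1 ≤ α) (hz : 2 ≤ z)
    (g : Fin (α * z ^ 2 - α * z) → F) (j : Fin (α * z ^ 2 - α * z)) :
    ∑ i : Fin (α * z + z), uniA α z g i j = 1 := by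
  have hB : 0 < α * z - α := by
    have h2 : α * 2 ≤ α * z := Nat.mul_le_mul_left α hz
    omega
  have hKz : α * z ^ 2 - α * z = z * (α * z - α) := by
    rw [Nat.mul_sub]; ring_nf
  have hstep : ∀ i : Fin (α * z + z), uniA α z g i j =
      (fun t : ℕ => if t < α * z then g j ^ (t + 1) else
        (∑ γ ∈ Finset.range α, g j ^ ((t - α * z) * α + γ + 1)) +
        (if (t - α * z) * (α * z - α) ≤ j.val ∧
            j.val < ((t - α * z) + 1) * (α * z - α) then 1 else 0)) i.val :=
    fun i => rfl
  have hA : ∑ i : Fin (α * z + z), uniA α z g i j =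
      ∑ t ∈ Finset.range (α * z + z),
        (fun t : ℕ => if t < α * z then g j ^ (t + 1) else
          (∑ γ ∈ Finset.range α, g j ^ ((t - α * z) * α + γ + 1)) +
          (if (t - α * z) * (α * z - α) ≤ j.val ∧
              j.val < ((t - α * z) + 1) * (α * z - α) then 1 else 0)) t := by
    rw [← Fin.sum_univ_eq_sum_range]
    exact Finset.sum_congr rfl fun i _ => hstep i
  rw [hA, Finset.sum_range_add]
  have h1 : ∀ t ∈ Finset.range (α * z),
      (fun t : ℕ => if t < α * z then g j ^ (t + 1) else
        (∑ γ ∈ Finset.range α, g j ^ ((t - α * z) * α + γ + 1)) +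
        (if (t - α * z) * (α * z - α) ≤ j.val ∧
            j.val < ((t - α * z) + 1) * (α * z - α) then 1 else 0)) t
      = g j ^ (t + 1) := by
    intro t ht
    simp only [if_pos (Finset.mem_range.mp ht)]
  have h2 : ∀ u ∈ Finset.range z,
      (fun t : ℕ => if t < α * z then g j ^ (t + 1) else
        (∑ γ ∈ Finset.range α, g j ^ ((t - α * z) * α + γ + 1)) +
        (if (t - α * z) * (α * z - α) ≤ j.val ∧
            j.val < ((t - α * z) + 1) * (α * z - α) then 1 else 0)) (α * z + u)
      = (∑ γ ∈ Finset.range α, g j ^ (u * α + γ + 1)) +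
        (if u * (α * z - α) ≤ j.val ∧ j.val < (u + 1) * (α * z - α) then 1 else 0) := by
    intro u _
    simp only [Nat.add_sub_cancel_left, if_neg (by omega : ¬ α * z + u < α * z)]
  rw [Finset.sum_congr rfl h1, Finset.sum_congr rfl h2, Finset.sum_add_distrib,
    uniSumBlocks (fun t => g j ^ (t + 1)) z α,
    show z * α = α * z from mul_comm z α,
    uniSumInd z (α * z - α) j.val hB (hKz ▸ j.isLt), ← add_assoc,
    CharTwo.add_self_eq_zero, zero_add]

end OneCol

/-- **Case `b = 0` in the proof of Theorem 3.2.**  With the UniLRC construction over a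
field of characteristic 2, any `r + 1 = αz + 1` columns of the parity-check matrix
`H = [A | I_{n−k}]` that avoid the `αz` identity columns corresponding to global-parity
coordinates (i.e. are chosen only among the `k` data columns and the `z` local-parity
identity columns) are linearly independent over `F`. -/
theorem unilrc_parity_check_columns_avoiding_global_linearIndependent
    {F : Type*} [Field F] [CharP F 2]
    (α z : ℕ) (hα : 1 ≤ α) (hz : 2 ≤ z)
    (g : Fin (α * z ^ 2 - α * z) → F) (hg : Function.Injective g)
    (hg0 : ∀ j, g j ≠ 0)
    (S : Finset (Fin (α * z ^ 2 + z))) (hS : S.card = α * z + 1)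
    (hSavoid : ∀ p ∈ S,
      p.val < α * z ^ 2 - α * z ∨ (α * z ^ 2 - α * z) + α * z ≤ p.val) :
    LinearIndependent F
      (fun p : {q // q ∈ S} => fun i : Fin (α * z + z) => uniH α z g i p.val) := by
  classical
  have hz2 : z ≤ z ^ 2 := by nlinarith
  have hRK : α * z ≤ α * z ^ 2 := Nat.mul_le_mul_left α hz2
  rw [Fintype.linearIndependent_iff]
  intro c hc
  have hrow : ∀ i : Fin (α * z + z), ∑ p : {q // q ∈ S}, c p * uniH α z g i p.val = 0 := by
    intro i
    have h := congrFun hc i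
    simpa [Finset.sum_apply, Pi.smul_apply, smul_eq_mul] using h
  have hcard : Fintype.card {q // q ∈ S} = α * z + 1 := by
    rw [Fintype.card_coe]; exact hS
  by_cases hall : ∀ p : {q // q ∈ S}, (p.val : Fin (α * z ^ 2 + z)).val < α * z ^ 2 - α * z
  · -- Case B : all chosen columns are data columns
    have hmom : ∀ t : ℕ, t ≤ α * z →
        ∑ p : {q // q ∈ S}, c p * g ⟨(p.val : Fin _).val, hall p⟩ ^ t = 0 := by
      intro t ht
      rcases Nat.eq_zero_or_pos t with rfl | hpos
      · simp only [pow_zero, mul_one]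
        have hone : ∀ p : {q // q ∈ S},
            (∑ i : Fin (α * z + z), uniH α z g i p.val) = 1 := by
          intro p
          have hcongr : ∀ i : Fin (α * z + z),
              uniH α z g i p.val = uniA α z g i ⟨(p.val : Fin _).val, hall p⟩ := by
            intro i; simp only [uniH]; rw [dif_pos (hall p)]
          rw [Finset.sum_congr rfl fun i _ => hcongr i]
          exact uniColSumOne α z hα hz g _
        have hsum0 : ∑ p : {q // q ∈ S},
            c p * (∑ i : Fin (α * z + z), uniH α z g i p.val) = 0 := by
          simp_rw [Finset.mul_sum]
          rw [Finset.sum_comm]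
          exact Finset.sum_eq_zero fun i _ => hrow i
        simpa [hone] using hsum0
      · obtain ⟨t', rfl⟩ : ∃ t', t = t' + 1 := ⟨t - 1, by omega⟩
        have hi : t' < α * z + z := Nat.lt_of_lt_of_le (Nat.lt_of_succ_le ht) (Nat.le_add_right _ _)
        have h := hrow ⟨t', hi⟩
        refine Eq.trans (Finset.sum_congr rfl fun p _ => ?_) h
        congr 1
        have : uniH α z g ⟨t', hi⟩ p.val
            = uniA α z g ⟨t', hi⟩ ⟨(p.val : Fin _).val, hall p⟩ := by
          simp only [uniH]; rw [dif_pos (hall p)]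
        rw [this]
        simp only [uniA]
        rw [if_pos (show (⟨t', hi⟩ : Fin (α * z + z)).val < α * z from Nat.lt_of_succ_le ht)]
    let e : Fin (α * z + 1) ≃ {q // q ∈ S} := (Fintype.equivFinOfCardEq hcard).symm
    have hzero : (fun t : Fin (α * z + 1) => c (e t)) = 0 := by
      apply uniVandZero (fun t => g ⟨((e t).val : Fin _).val, hall (e t)⟩)
      · intro a b hab
        apply e.injective
        apply Subtype.ext
        apply Fin.ext
        exact congrArg (fun x : Fin (α * z ^ 2 - α * z) => x.val) (hg hab)
      · intro t
        have := hmom t.val (by omega)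
        rw [← this]
        exact Fintype.sum_equiv e _ _ fun q => rfl
    intro p
    have := congrFun hzero (e.symm p)
    simpa using this
  · -- Case A : at least one chosen column is a local-parity column
    push_neg at hall
    obtain ⟨p0, hp0⟩ := hall
    set Dset : Finset {q // q ∈ S} :=
      Finset.univ.filter (fun p => (p.val : Fin (α * z ^ 2 + z)).val < α * z ^ 2 - α * z)
      with hDset
    have hp0D : p0 ∉ Dset := by
      rw [hDset]; simp [hp0]
    have hd : Dset.card ≤ α * z := by
      have hss : Dset ⊂ Finset.univ := by
        refine Finset.ssubset_iff_of_subset (Finset.subset_univ _) |>.mpr ?_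
        exact ⟨p0, Finset.mem_univ _, hp0D⟩
      have := Finset.card_lt_card hss
      rw [Finset.card_univ, hcard] at this
      omega
    set gS : {q // q ∈ S} → F := fun p =>
      if h : (p.val : Fin (α * z ^ 2 + z)).val < α * z ^ 2 - α * z
      then g ⟨(p.val : Fin _).val, h⟩ else 0 with hgS
    have hmomD : ∀ t : ℕ, t < α * z →
        ∑ p ∈ Dset, (c p * gS p) * gS p ^ t = 0 := by
      intro t ht
      have hti : t < α * z + z := by omega
      have h := hrow ⟨t, hti⟩
      rw [← Finset.sum_filter_add_sum_filter_not Finset.univ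
        (fun p => (p.val : Fin (α * z ^ 2 + z)).val < α * z ^ 2 - α * z)
        (fun p => c p * uniH α z g ⟨t, hti⟩ p.val)] at h
      have hzero2 : ∑ p ∈ Finset.univ.filter
          (fun p : {q // q ∈ S} =>
            ¬ (p.val : Fin (α * z ^ 2 + z)).val < α * z ^ 2 - α * z),
          c p * uniH α z g ⟨t, hti⟩ p.val = 0 := by
        refine Finset.sum_eq_zero fun q hq => ?_
        have hnd := (Finset.mem_filter.mp hq).2
        have havoid := hSavoid q.val q.prop
        have hge : α * z ^ 2 - α * z + α * z ≤ (q.val : Fin _).val := by tauto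
        have : uniH α z g ⟨t, hti⟩ q.val = 0 := by
          simp only [uniH]
          rw [dif_neg hnd, if_neg (by omega)]
        rw [this, mul_zero]
      rw [hzero2, add_zero] at h
      rw [← h]
      refine Finset.sum_congr rfl fun q hq => ?_
      have hqd := (Finset.mem_filter.mp hq).2
      have huniH : uniH α z g ⟨t, hti⟩ q.val
          = g ⟨(q.val : Fin _).val, hqd⟩ ^ (t + 1) := by
        simp only [uniH]
        rw [dif_pos hqd]
        simp only [uniA]
        rw [if_pos (show (⟨t, hti⟩ : Fin (α * z + z)).val < α * z from ht)]
      have hgSq : gS q = g ⟨(q.val : Fin _).val, hqd⟩ := by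
        rw [hgS]; simp only [dif_pos hqd]
      rw [huniH, hgSq]
      ring
    have hdata0 : ∀ p : {q // q ∈ S},
        (p.val : Fin (α * z ^ 2 + z)).val < α * z ^ 2 - α * z → c p = 0 := by
      have hcd : Fintype.card {q // q ∈ Dset} = Dset.card := Fintype.card_coe _
      let eD : Fin Dset.card ≃ {q // q ∈ Dset} := (Fintype.equivFinOfCardEq hcd).symm
      have hgSinj : ∀ q1 q2 : {q // q ∈ Dset}, gS q1.val = gS q2.val → q1 = q2 := by
        intro q1 q2 hq
        have h1 := (Finset.mem_filter.mp q1.prop).2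
        have h2 := (Finset.mem_filter.mp q2.prop).2
        rw [hgS] at hq
        simp only [dif_pos h1, dif_pos h2] at hq
        have := congrArg Fin.val (hg hq)
        exact Subtype.ext (Subtype.ext (Fin.ext this))
      have hzeroD : (fun q : Fin Dset.card => c (eD q).val * gS (eD q).val) = 0 := by
        apply uniVandZero (fun q => gS (eD q).val)
        · intro a b hab
          exact eD.injective (hgSinj _ _ hab)
        · intro t
          have ht : (t : ℕ) < α * z := by omega
          have h := hmomD t.val ht
          rw [← h, ← Finset.sum_coe_sort Dset (fun p => (c p * gS p) * gS p ^ (t : ℕ))]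
          exact Fintype.sum_equiv eD _ _ fun q => rfl
      intro p hp
      have hpD : p ∈ Dset := by rw [hDset]; simp [hp]
      have := congrFun hzeroD (eD.symm ⟨p, hpD⟩)
      simp only [Equiv.apply_symm_apply, Pi.zero_apply] at this
      have hgSne : gS p ≠ 0 := by
        rw [hgS]; simp only [dif_pos hp]; exact hg0 _
      exact (mul_eq_zero.mp this).resolve_right hgSne
    intro p
    by_cases hp : (p.val : Fin (α * z ^ 2 + z)).val < α * z ^ 2 - α * z
    · exact hdata0 p hp
    · have havoid := hSavoid p.val p.prop
      have hge : α * z ^ 2 - α * z + α * z ≤ (p.val : Fin _).val := by tauto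
      have hlt := (p.val : Fin (α * z ^ 2 + z)).isLt
      have hiB : (p.val : Fin _).val - (α * z ^ 2 - α * z) < α * z + z := by omega
      have h := hrow ⟨(p.val : Fin _).val - (α * z ^ 2 - α * z), hiB⟩
      rw [Finset.sum_eq_single p] at h
      · rw [← h]
        have : uniH α z g ⟨(p.val : Fin _).val - (α * z ^ 2 - α * z), hiB⟩ p.val = 1 := by
          simp only [uniH]
          rw [dif_neg hp]
          simp
        rw [this, mul_one]
      · intro q _ hqp
        by_cases hqd : (q.val : Fin (α * z ^ 2 + z)).val < α * z ^ 2 - α * z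
        · rw [hdata0 q hqd, zero_mul]
        · have havoidq := hSavoid q.val q.prop
          have hgeq : α * z ^ 2 - α * z + α * z ≤ (q.val : Fin _).val := by tauto
          have : uniH α z g ⟨(p.val : Fin _).val - (α * z ^ 2 - α * z), hiB⟩ q.val = 0 := by
            simp only [uniH]
            rw [dif_neg hqd, if_neg]
            intro heq
            apply hqp
            have : (q.val : Fin (α * z ^ 2 + z)).val = (p.val : Fin _).val := by omega
            exact Subtype.ext (Fin.ext this.symm) |>.symm
          rw [this, mul_zero]
      · intro hmem
        exact absurd (Finset.mem_univ p) hmem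
end
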